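/- arXiv:1212.0036 — 5 statements merged into one kernel-verified Lean document; each statement's English description precedes it below -/
import Mathlib

section
/- Let Ω ⊂ ℝ² be a bounded open set, T > 0, 1 < p < ∞, and p' = p/(p−1). Let u : ℝ² × ℝ → ℝ², ω : ℝ² × ℝ → ℝ, and g : ℝ² × ℝ → ℝ be C^∞ functions such that ∂_t ω + u·∇_x ω = g on Ω × (0,T) and ∂₁u₁(x,t) + ∂₂u₂(x,t) = 0 for all (x,t) ∈ Ω × (0,T). Then for every φ ∈ C_c^∞(Ω) (smooth with compact support contained in Ω) and all 0 ≤ t₁ ≤ t₂ ≤ T: |∫_Ω (ω(x,t₂) − ω(x,t₁)) φ(x) dx| ≤ (t₂ − t₁) · (sup_{t∈[0,T]} ‖u(·,t)‖_{L^{p'}(Ω)}) · ‖∇φ‖_{L^∞(Ω)} · (sup_{t∈[0,T]} ‖ω(·,t)‖_{L^p(Ω)}) + (t₂ − t₁)^{1/p'} · (∫_0^T ‖g(·,s)‖_{L^p(Ω)}^p ds)^{1/p} · ‖φ‖_{L^{p'}(Ω)}. -/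
open Set MeasureTheory

noncomputable section

abbrev E2 := EuclideanSpace ℝ (Fin 2)

lemma real_le_biSup {α : Type*} {s : Set α} {f : α → ℝ} {C : ℝ}
    (hub : ∀ t ∈ s, f t ≤ C) {t : α} (ht : t ∈ s) : f t ≤ ⨆ t ∈ s, f t := by
  have hb : BddAbove (Set.range fun t' => ⨆ _ : t' ∈ s, f t') := by
    refine ⟨max C 0, ?_⟩
    rintro y ⟨t', rfl⟩
    by_cases h : t' ∈ s
    · simpa [ciSup_pos h] using le_max_of_le_left (hub t' h)
    · haveI : IsEmpty (t' ∈ s) := ⟨h⟩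
      simp [Real.iSup_of_isEmpty]
  calc f t = ⨆ _ : t ∈ s, f t := by rw [ciSup_pos ht]
  _ ≤ ⨆ t ∈ s, f t := le_ciSup hb t

lemma real_biSup_nonneg {α : Type*} {s : Set α} {f : α → ℝ}
    (h : ∀ t ∈ s, 0 ≤ f t) : 0 ≤ ⨆ t ∈ s, f t :=
  Real.iSup_nonneg fun t => Real.iSup_nonneg fun ht => h t ht

lemma isFiniteRestrict {s : Set E2} (hs : Bornology.IsBounded s) :
    IsFiniteMeasure (volume.restrict s) := by
  constructor
  rw [Measure.restrict_apply_univ]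
  exact lt_of_le_of_lt (measure_mono subset_closure) hs.isCompact_closure.measure_lt_top

lemma integrableOn_of_continuous {f : E2 → ℝ} (hf : Continuous f) {s : Set E2}
    (hs : Bornology.IsBounded s) : IntegrableOn f s volume :=
  (hf.continuousOn.integrableOn_compact hs.isCompact_closure).mono_set subset_closure

lemma continuous_param {f : E2 × ℝ → ℝ} (hf : Continuous f) {s : Set E2}
    (hms : MeasurableSet s) (hs : Bornology.IsBounded s) :
    Continuous (fun t : ℝ => ∫ x in s, f (x, t)) := by
  haveI := isFiniteRestrict hs
  rw [continuous_iff_continuousAt]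
  intro t₀
  obtain ⟨C, hC⟩ := ((hs.isCompact_closure.prod
    (isCompact_Icc (a := t₀ - 1) (b := t₀ + 1)))).exists_bound_of_continuousOn hf.continuousOn
  apply continuousAt_of_dominated (bound := fun _ => C)
  · exact .of_forall fun t =>
      (hf.comp (continuous_id.prodMk continuous_const)).aestronglyMeasurable
  · filter_upwards [Icc_mem_nhds (by linarith : t₀ - 1 < t₀) (by linarith : t₀ < t₀ + 1)]
      with t ht
    filter_upwards [ae_restrict_mem hms] with x hx
    exact hC (x, t) ⟨subset_closure hx, ht⟩
  · exact integrable_const C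
  · exact .of_forall fun x => (hf.comp (continuous_const.prodMk continuous_id)).continuousAt

lemma hasFDerivAt_slice {f : E2 × ℝ → ℝ} (hf : ContDiff ℝ (⊤ : ℕ∞) f) (s : ℝ) (x : E2) :
    HasFDerivAt (fun y => f (y, s))
      ((fderiv ℝ f (x, s)).comp ((ContinuousLinearMap.id ℝ E2).prod 0)) x :=
  ((hf.differentiable (by simp) (x, s)).hasFDerivAt).comp x
    ((hasFDerivAt_id x).prodMk (hasFDerivAt_const s x))

lemma fderiv_slice {f : E2 × ℝ → ℝ} (hf : ContDiff ℝ (⊤ : ℕ∞) f) (s : ℝ) (x : E2) (v : E2) :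
    fderiv ℝ (fun y => f (y, s)) x v = fderiv ℝ f (x, s) (v, 0) := by
  rw [(hasFDerivAt_slice hf s x).fderiv]; rfl

lemma contDiff_slice {f : E2 × ℝ → ℝ} (hf : ContDiff ℝ (⊤ : ℕ∞) f) (s : ℝ) :
    ContDiff ℝ (⊤ : ℕ∞) (fun y => f (y, s)) :=
  hf.comp (contDiff_id.prodMk contDiff_const)

lemma hasDerivAt_time {f : E2 × ℝ → ℝ} (hf : ContDiff ℝ (⊤ : ℕ∞) f) (x : E2) (t : ℝ) :
    HasDerivAt (fun s => f (x, s)) (fderiv ℝ f (x, t) (0, 1)) t := by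
  have h := ((hf.differentiable (by simp) (x, t)).hasFDerivAt).comp_hasDerivAt t
    ((hasDerivAt_const t x).prodMk (hasDerivAt_id t))
  simpa [Function.comp_def] using h

lemma continuous_fderiv_apply {f : E2 × ℝ → ℝ} (hf : ContDiff ℝ (⊤ : ℕ∞) f) (v : E2 × ℝ) :
    Continuous (fun z => fderiv ℝ f z v) :=
  (hf.continuous_fderiv (by simp)).clm_apply continuous_const

lemma euclid_decomp (y : E2) : ∑ i : Fin 2, y i • EuclideanSpace.single i (1:ℝ) = y := by
  have := (EuclideanSpace.basisFun (Fin 2) ℝ).sum_repr y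
  simpa [EuclideanSpace.basisFun_apply, smul_eq_mul] using this

lemma fderiv_apply_decomp (φ : E2 → ℝ) (x : E2) (y : E2) :
    fderiv ℝ φ x y = ∑ i : Fin 2, y i * fderiv ℝ φ x (EuclideanSpace.single i 1) := by
  conv_lhs => rw [← euclid_decomp y]
  rw [map_sum]
  simp [smul_eq_mul]

lemma continuous_gradient {φ : E2 → ℝ} (hφ : ContDiff ℝ (⊤ : ℕ∞) φ) :
    Continuous (fun x => gradient φ x) :=
  (InnerProductSpace.toDual ℝ E2).symm.continuous.comp (hφ.continuous_fderiv (by simp))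

lemma abs_fderiv_le_gradient (φ : E2 → ℝ) (x y : E2) :
    |fderiv ℝ φ x y| ≤ ‖gradient φ x‖ * ‖y‖ := by
  have : fderiv ℝ φ x y = inner ℝ (gradient φ x) y := (InnerProductSpace.toDual_symm_apply).symm
  rw [this]
  exact abs_real_inner_le_norm _ _

/-- integrability on a product with restricted time, for continuous functions with
spatially compact support. -/
lemma integrable_prod_aux {f : E2 × ℝ → ℝ} (hf : Continuous f) {K : Set E2}
    (hK : IsCompact K) (hsupp : ∀ z : E2 × ℝ, z.1 ∉ K → f z = 0) (t₁ t₂ : ℝ) :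
    Integrable f (volume.prod (volume.restrict (Ioc t₁ t₂))) := by
  have hrw : (volume : Measure E2).prod (volume.restrict (Ioc t₁ t₂))
      = ((volume : Measure E2).prod volume).restrict (univ ×ˢ Ioc t₁ t₂) := by
    rw [← Measure.prod_restrict, Measure.restrict_univ]
  rw [hrw]
  obtain ⟨C, hC⟩ := (hK.prod (isCompact_Icc (a := t₁) (b := t₂))).exists_bound_of_continuousOn
    hf.continuousOn
  have hmeas : MeasurableSet (K ×ˢ Icc t₁ t₂) :=
    (hK.isClosed.measurableSet).prod measurableSet_Icc
  refine Integrable.mono' (g := (K ×ˢ Icc t₁ t₂).indicator fun _ => C) ?_ ?_ ?_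
  · refine (IntegrableOn.integrable_indicator ?_ hmeas).restrict
    refine integrableOn_const (ne_of_lt ?_)
    rw [Measure.prod_prod]
    exact ENNReal.mul_lt_top hK.measure_lt_top (by simp)
  · exact hf.aestronglyMeasurable.restrict
  · filter_upwards [ae_restrict_mem (MeasurableSet.univ.prod measurableSet_Ioc)] with z hz
    by_cases hzK : z.1 ∈ K
    · have hzm : z ∈ K ×ˢ Icc t₁ t₂ := ⟨hzK, Ioc_subset_Icc_self hz.2⟩
      rw [indicator_of_mem hzm]
      exact hC z hzm
    · rw [hsupp z hzK]
      simp only [norm_zero]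
      exact indicator_nonneg (fun y hy => le_trans (norm_nonneg _) (hC y hy)) z

/-- uniform bound for the Lᵖ-type quantities over a time interval. -/
lemma sup_bound {h : E2 × ℝ → ℝ} (hh : Continuous h) (hpos : ∀ z, 0 ≤ h z)
    {Ω : Set E2} (hmeas : MeasurableSet Ω) (hΩ : Bornology.IsBounded Ω)
    (a b r : ℝ) (hr : 0 < r) :
    ∃ C, ∀ t ∈ Icc a b, (∫ x in Ω, h (x, t) ^ r) ^ (1/r) ≤ C := by
  obtain ⟨M, hM⟩ := (hΩ.isCompact_closure.prod (isCompact_Icc (a := a) (b := b))).exists_bound_of_continuousOn hh.continuousOn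
  haveI := isFiniteRestrict hΩ
  set M' := max M 0 with hM'
  refine ⟨(M' ^ r * (volume Ω).toReal) ^ (1/r), fun t ht => ?_⟩
  have h1 : (∫ x in Ω, h (x, t) ^ r) ≤ M' ^ r * (volume Ω).toReal := by
    have : ∀ x ∈ Ω, h (x, t) ^ r ≤ M' ^ r := by
      intro x hx
      apply Real.rpow_le_rpow (hpos _) _ hr.le
      calc h (x, t) ≤ |h (x, t)| := le_abs_self _
      _ = ‖h (x, t)‖ := rfl
      _ ≤ M := hM (x, t) ⟨subset_closure hx, ht⟩
      _ ≤ M' := le_max_left _ _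
    calc (∫ x in Ω, h (x, t) ^ r) ≤ ∫ _x in Ω, M' ^ r := by
          apply setIntegral_mono_on ?_ (integrableOn_const (ne_of_lt ?_)) ?_ this
          · refine integrableOn_of_continuous ?_ hΩ
            exact (hh.comp (continuous_id.prodMk continuous_const)).rpow_const
              (fun x => Or.inr hr.le)
          · exact lt_of_le_of_lt (measure_mono subset_closure)
              hΩ.isCompact_closure.measure_lt_top
          · exact hmeas
    _ = M' ^ r * (volume Ω).toReal := by rw [setIntegral_const, smul_eq_mul, mul_comm, measureReal_def]
  apply Real.rpow_le_rpow _ h1 (by positivity)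
  exact setIntegral_nonneg hmeas (fun x _ => Real.rpow_nonneg (hpos _) _)


lemma stmt4_key (Ω : Set E2) (hΩopen : IsOpen Ω) (hΩbdd : Bornology.IsBounded Ω)
    (T p : ℝ) (hT : 0 < T) (hp : 1 < p)
    (u : E2 × ℝ → E2) (ω g : E2 × ℝ → ℝ)
    (hu : ContDiff ℝ (⊤ : ℕ∞) u) (hω : ContDiff ℝ (⊤ : ℕ∞) ω) (hg : ContDiff ℝ (⊤ : ℕ∞) g)
    (heq : ∀ x ∈ Ω, ∀ t ∈ Set.Ioo (0:ℝ) T,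
      fderiv ℝ ω (x, t) (0, 1)
        + ∑ i : Fin 2, u (x, t) i * fderiv ℝ ω (x, t) (EuclideanSpace.single i 1, 0)
        = g (x, t))
    (hdiv : ∀ x ∈ Ω, ∀ t ∈ Set.Ioo (0:ℝ) T,
      fderiv ℝ (fun q => u q 0) (x, t) (EuclideanSpace.single 0 1, 0)
        + fderiv ℝ (fun q => u q 1) (x, t) (EuclideanSpace.single 1 1, 0) = 0)
    (φ : E2 → ℝ)
    (hφ : ContDiff ℝ (⊤ : ℕ∞) φ) (hφc : HasCompactSupport φ) (hφsupp : tsupport φ ⊆ Ω)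
    (s : ℝ) (hs : s ∈ Ioo 0 T) :
    (∫ x, (fderiv ℝ ω (x,s) (0,1)) * φ x) =
      (∫ x, ω (x,s) * fderiv ℝ φ x (u (x,s))) + ∫ x, g (x,s) * φ x := by
  classical
  set v : Fin 2 → E2 := fun i => EuclideanSpace.single i 1 with hv
  set a : E2 → ℝ := fun x => ω (x, s) * φ x with ha
  set b : Fin 2 → E2 → ℝ := fun i x => u (x, s) i with hb
  have hbC : ∀ i, ContDiff ℝ (⊤ : ℕ∞) fun q : E2 × ℝ => u q i := fun i =>
    (ContinuousLinearMap.contDiff (EuclideanSpace.proj i : E2 →L[ℝ] ℝ)).comp hu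
  have haC : ContDiff ℝ (⊤ : ℕ∞) a := (contDiff_slice hω s).mul hφ
  have hbiC : ∀ i, ContDiff ℝ (⊤ : ℕ∞) (b i) := fun i => contDiff_slice (hbC i) s
  -- compact support facts
  have hφz : ∀ x, x ∉ tsupport φ → φ x = 0 := fun x hx => image_eq_zero_of_notMem_tsupport hx
  have hφdz : ∀ x, x ∉ tsupport φ → fderiv ℝ φ x = 0 := by
    intro x hx
    by_contra h
    exact hx (support_fderiv_subset (𝕜 := ℝ) (Function.mem_support.2 h))
  have haz : ∀ x, x ∉ tsupport φ → a x = 0 := fun x hx => by simp [ha, hφz x hx]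
  have hacs : HasCompactSupport a := HasCompactSupport.intro hφc haz
  -- integrability of everything continuous supported in tsupport φ
  have intCS : ∀ {f : E2 → ℝ}, Continuous f → (∀ x, x ∉ tsupport φ → f x = 0) →
      Integrable f volume := fun hf h0 =>
    hf.integrable_of_hasCompactSupport (HasCompactSupport.intro hφc h0)
  have hacont : Continuous a := haC.continuous
  have hfd_a : ∀ i, Continuous fun x => fderiv ℝ a x (v i) := fun i =>
    (haC.continuous_fderiv (by simp)).clm_apply continuous_const
  have hfd_b : ∀ i, Continuous fun x => fderiv ℝ (b i) x (v i) := fun i =>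
    ((hbiC i).continuous_fderiv (by simp)).clm_apply continuous_const
  have hbcont : ∀ i, Continuous (b i) := fun i => (hbiC i).continuous
  -- derivative of a vanishes off tsupport φ
  have htsa : tsupport a ⊆ tsupport φ :=
    closure_mono (Function.support_mul_subset_right _ _)
  have hadz : ∀ x, x ∉ tsupport φ → fderiv ℝ a x = 0 := by
    intro x hx
    by_contra h
    exact hx (htsa (support_fderiv_subset (𝕜 := ℝ) (Function.mem_support.2 h)))
  -- per-direction integration by parts
  have hibp : ∀ i : Fin 2, ∫ x, b i x * fderiv ℝ a x (v i)
      = -∫ x, fderiv ℝ (b i) x (v i) * a x := by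
    intro i
    apply integral_mul_fderiv_eq_neg_fderiv_mul_of_integrable
    · exact intCS ((hfd_b i).mul hacont) (fun x hx => by simp [haz x hx])
    · exact intCS ((hbcont i).mul (hfd_a i)) (fun x hx => by
        simp [hadz x hx])
    · exact intCS ((hbcont i).mul hacont) (fun x hx => by simp [haz x hx])
    · exact fun x _ => (hbiC i).differentiable (by simp) x
    · exact fun x _ => haC.differentiable (by simp) x
  -- the divergence term vanishes
  have hdiv0 : ∀ i : Fin 2, ∀ x : E2,
      fderiv ℝ (b i) x (v i) = fderiv ℝ (fun q : E2 × ℝ => u q i) (x, s) (v i, 0) :=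
    fun i x => fderiv_slice (hbC i) s x (v i)
  have hsumdiv : ∀ x : E2, (∑ i : Fin 2, fderiv ℝ (b i) x (v i)) * a x = 0 := by
    intro x
    by_cases hx : x ∈ tsupport φ
    · have hxΩ : x ∈ Ω := hφsupp hx
      have := hdiv x hxΩ s hs
      rw [Fin.sum_univ_two, hdiv0 0 x, hdiv0 1 x]
      simp only [hv]
      rw [hdiv x hxΩ s hs, zero_mul]
    · simp [haz x hx]
  -- continuity of spatial derivatives of ω, φ in given directions
  have hcω : ∀ i : Fin 2, Continuous fun x : E2 => fderiv ℝ ω (x, s) (v i, (0:ℝ)) := fun i =>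
    ((hω.continuous_fderiv (by simp)).clm_apply continuous_const).comp
      (continuous_id.prodMk continuous_const)
  have hcφd : ∀ i : Fin 2, Continuous fun x : E2 => fderiv ℝ φ x (v i) := fun i =>
    (hφ.continuous_fderiv (by simp)).clm_apply continuous_const
  -- integrability of the P and R integrands
  have hPint : ∀ i : Fin 2,
      Integrable (fun x => u (x, s) i * fderiv ℝ ω (x, s) (v i, 0) * φ x) volume := fun i =>
    intCS (((hbcont i).mul (hcω i)).mul hφ.continuous) (fun x hx => by simp [hφz x hx])
  have hRint : ∀ i : Fin 2,
      Integrable (fun x => ω (x, s) * (u (x, s) i * fderiv ℝ φ x (v i))) volume := fun i =>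
    intCS ((contDiff_slice hω s).continuous.mul ((hbcont i).mul (hcφd i)))
      (fun x hx => by simp [hφdz x hx])
  have hDint : ∀ i : Fin 2,
      Integrable (fun x => fderiv ℝ (b i) x (v i) * a x) volume := fun i =>
    intCS ((hfd_b i).mul hacont) (fun x hx => by simp [haz x hx])
  -- expansion of the derivative of a
  have hfda : ∀ x : E2, ∀ i : Fin 2, fderiv ℝ a x (v i)
      = φ x * fderiv ℝ ω (x, s) (v i, 0) + ω (x, s) * fderiv ℝ φ x (v i) := by
    intro x i
    have h1 : DifferentiableAt ℝ (fun y => ω (y, s)) x :=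
      (contDiff_slice hω s).differentiable (by simp) x
    have h2 : DifferentiableAt ℝ φ x := hφ.differentiable (by simp) x
    have hm := fderiv_mul h1 h2
    have : fderiv ℝ a x = fderiv ℝ (fun y => ω (y, s) * φ y) x := rfl
    rw [show fderiv ℝ a x = fderiv ℝ ((fun y => ω (y, s)) * φ) x from rfl, hm]
    simp only [ContinuousLinearMap.add_apply, ContinuousLinearMap.smul_apply, smul_eq_mul]
    rw [fderiv_slice hω s x (v i)]
    ring
  have hLHSi : ∀ i : Fin 2, ∫ x, b i x * fderiv ℝ a x (v i)
      = (∫ x, u (x, s) i * fderiv ℝ ω (x, s) (v i, 0) * φ x)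
        + ∫ x, ω (x, s) * (u (x, s) i * fderiv ℝ φ x (v i)) := by
    intro i
    rw [← integral_add (hPint i) (hRint i)]
    congr 1; funext x
    rw [hfda x i]
    show u (x, s) i * _ = _
    ring
  have hadd0 : (∫ x, fderiv ℝ (b 0) x (v 0) * a x) + (∫ x, fderiv ℝ (b 1) x (v 1) * a x) = 0 := by
    rw [← integral_add (hDint 0) (hDint 1)]
    have hz : ∀ x : E2, fderiv ℝ (b 0) x (v 0) * a x + fderiv ℝ (b 1) x (v 1) * a x = 0 := by
      intro x
      have := hsumdiv x
      rw [Fin.sum_univ_two, add_mul] at this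
      exact this
    simp only [hz, integral_zero]
  -- combine: ∫ S φ = - ∫ U
  have hS : ∫ x, (∑ i : Fin 2, u (x, s) i * fderiv ℝ ω (x, s) (v i, 0)) * φ x
      = (∫ x, u (x, s) 0 * fderiv ℝ ω (x, s) (v 0, 0) * φ x)
        + ∫ x, u (x, s) 1 * fderiv ℝ ω (x, s) (v 1, 0) * φ x := by
    rw [← integral_add (hPint 0) (hPint 1)]
    congr 1; funext x
    rw [Fin.sum_univ_two, add_mul]
  have hU : ∫ x, ω (x, s) * fderiv ℝ φ x (u (x, s))
      = (∫ x, ω (x, s) * (u (x, s) 0 * fderiv ℝ φ x (v 0)))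
        + ∫ x, ω (x, s) * (u (x, s) 1 * fderiv ℝ φ x (v 1)) := by
    rw [← integral_add (hRint 0) (hRint 1)]
    congr 1; funext x
    rw [fderiv_apply_decomp φ x (u (x, s)), Fin.sum_univ_two, mul_add]
  have hkey : ∫ x, (∑ i : Fin 2, u (x, s) i * fderiv ℝ ω (x, s) (v i, 0)) * φ x
      = - ∫ x, ω (x, s) * fderiv ℝ φ x (u (x, s)) := by
    have e0 := hibp 0
    have e1 := hibp 1
    have l0 := hLHSi 0
    have l1 := hLHSi 1
    rw [hS, hU]
    linarith
  -- use the equation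
  have hSint : Integrable (fun x => (∑ i : Fin 2, u (x, s) i * fderiv ℝ ω (x, s) (v i, 0)) * φ x)
      volume := by
    have : Continuous fun x : E2 => (∑ i : Fin 2, u (x, s) i * fderiv ℝ ω (x, s) (v i, 0)) :=
      continuous_finset_sum _ fun i _ => (hbcont i).mul (hcω i)
    exact intCS (this.mul hφ.continuous) (fun x hx => by simp [hφz x hx])
  have hGint : Integrable (fun x => g (x, s) * φ x) volume :=
    intCS ((contDiff_slice hg s).continuous.mul hφ.continuous) (fun x hx => by simp [hφz x hx])
  have hptA : ∀ x : E2, fderiv ℝ ω (x, s) (0, 1) * φ x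
      = g (x, s) * φ x
        - (∑ i : Fin 2, u (x, s) i * fderiv ℝ ω (x, s) (v i, 0)) * φ x := by
    intro x
    by_cases hx : x ∈ tsupport φ
    · have := heq x (hφsupp hx) s hs
      simp only [hv]
      rw [← this]
      ring
    · rw [hφz x hx]
      ring
  calc ∫ x, fderiv ℝ ω (x, s) (0, 1) * φ x
      = ∫ x, (g (x, s) * φ x
          - (∑ i : Fin 2, u (x, s) i * fderiv ℝ ω (x, s) (v i, 0)) * φ x) := by
        congr 1; funext x; exact hptA x
    _ = (∫ x, g (x, s) * φ x)
          - ∫ x, (∑ i : Fin 2, u (x, s) i * fderiv ℝ ω (x, s) (v i, 0)) * φ x :=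
        integral_sub hGint hSint
    _ = (∫ x, ω (x, s) * fderiv ℝ φ x (u (x, s))) + ∫ x, g (x, s) * φ x := by
        rw [hkey]; ring

/-- equicontinuity-type estimate for the vorticity. If
`∂_t ω + u·∇ω = g` on `Ω × (0,T)` with `div u = 0` pointwise on `Ω × (0,T)`, then for
every `φ ∈ C_c^∞(Ω)` and `0 ≤ t₁ ≤ t₂ ≤ T`,
`|∫_Ω (ω(t₂) − ω(t₁))φ| ≤ (t₂−t₁)·(sup_t ‖u(t)‖_{p'})·‖∇φ‖_∞·(sup_t ‖ω(t)‖_p)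
  + (t₂−t₁)^{1/p'}·(∫_0^T ‖g(s)‖_p^p ds)^{1/p}·‖φ‖_{p'}`, where `p' = p/(p−1)`. -/
theorem stmt4 (Ω : Set (EuclideanSpace ℝ (Fin 2)))
    (hΩopen : IsOpen Ω) (hΩbdd : Bornology.IsBounded Ω)
    (T p : ℝ) (hT : 0 < T) (hp : 1 < p)
    (u : EuclideanSpace ℝ (Fin 2) × ℝ → EuclideanSpace ℝ (Fin 2))
    (ω g : EuclideanSpace ℝ (Fin 2) × ℝ → ℝ)
    (hu : ContDiff ℝ (⊤ : ℕ∞) u) (hω : ContDiff ℝ (⊤ : ℕ∞) ω) (hg : ContDiff ℝ (⊤ : ℕ∞) g)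
    (heq : ∀ x ∈ Ω, ∀ t ∈ Set.Ioo (0:ℝ) T,
      fderiv ℝ ω (x, t) (0, 1)
        + ∑ i : Fin 2, u (x, t) i * fderiv ℝ ω (x, t) (EuclideanSpace.single i 1, 0)
        = g (x, t))
    (hdiv : ∀ x ∈ Ω, ∀ t ∈ Set.Ioo (0:ℝ) T,
      fderiv ℝ (fun q => u q 0) (x, t) (EuclideanSpace.single 0 1, 0)
        + fderiv ℝ (fun q => u q 1) (x, t) (EuclideanSpace.single 1 1, 0) = 0)
    (φ : EuclideanSpace ℝ (Fin 2) → ℝ)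
    (hφ : ContDiff ℝ (⊤ : ℕ∞) φ) (hφc : HasCompactSupport φ) (hφsupp : tsupport φ ⊆ Ω)
    (t₁ t₂ : ℝ) (ht₁ : 0 ≤ t₁) (ht₁₂ : t₁ ≤ t₂) (ht₂ : t₂ ≤ T) :
    |∫ x in Ω, (ω (x, t₂) - ω (x, t₁)) * φ x|
      ≤ (t₂ - t₁)
          * (⨆ t ∈ Set.Icc (0:ℝ) T, (∫ x in Ω, ‖u (x, t)‖ ^ (p/(p-1))) ^ (1/(p/(p-1))))
          * (⨆ x ∈ Ω, ‖gradient φ x‖)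
          * (⨆ t ∈ Set.Icc (0:ℝ) T, (∫ x in Ω, |ω (x, t)| ^ p) ^ (1/p))
        + (t₂ - t₁) ^ (1/(p/(p-1)))
          * (∫ s in (0:ℝ)..T, ∫ x in Ω, |g (x, s)| ^ p) ^ (1/p)
          * (∫ x in Ω, |φ x| ^ (p/(p-1))) ^ (1/(p/(p-1))) := by
  have key : ∀ s ∈ Ioo (0:ℝ) T,
      (∫ x, (fderiv ℝ ω (x,s) (0,1)) * φ x) =
        (∫ x, ω (x,s) * fderiv ℝ φ x (u (x,s))) + ∫ x, g (x,s) * φ x :=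
    fun s hs => stmt4_key Ω hΩopen hΩbdd T p hT hp u ω g hu hω hg heq hdiv φ hφ hφc hφsupp s hs

  classical
  haveI := isFiniteRestrict hΩbdd
  set q : ℝ := p / (p - 1) with hq
  have hpq : p.HolderConjugate q := Real.HolderConjugate.conjExponent hp
  have hp0 : 0 < p := hpq.pos
  have hq0 : 0 < q := hpq.symm.pos
  set κ := volume.restrict (Ioc t₁ t₂) with hκdef
  set K := tsupport φ with hKdef
  have hφz : ∀ x, x ∉ K → φ x = 0 := fun x hx => image_eq_zero_of_notMem_tsupport hx
  have hφdz : ∀ x, x ∉ K → fderiv ℝ φ x = 0 := by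
    intro x hx
    by_contra h
    exact hx (support_fderiv_subset (𝕜 := ℝ) (Function.mem_support.2 h))
  have hgradz : ∀ x, x ∉ K → gradient φ x = 0 := by
    intro x hx
    unfold gradient
    rw [hφdz x hx, map_zero]
  -- the three integrands as functions of (x, s)
  set A : E2 × ℝ → ℝ := fun z => fderiv ℝ ω z (0, 1) * φ z.1 with hAdef
  set U : E2 × ℝ → ℝ := fun z => ω z * fderiv ℝ φ z.1 (u z) with hUdef
  set G : E2 × ℝ → ℝ := fun z => g z * φ z.1 with hGdef
  have hAcont : Continuous A :=
    ((hω.continuous_fderiv (by simp)).clm_apply continuous_const).mul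
      (hφ.continuous.comp continuous_fst)
  have hUcont : Continuous U :=
    hω.continuous.mul
      (((hφ.continuous_fderiv (by simp)).comp continuous_fst).clm_apply hu.continuous)
  have hGcont : Continuous G := hg.continuous.mul (hφ.continuous.comp continuous_fst)
  -- FTC in time
  have h1 : ∀ x : E2, (ω (x, t₂) - ω (x, t₁)) * φ x = ∫ s, A (x, s) ∂κ := by
    intro x
    have hder : ∀ s ∈ uIcc t₁ t₂, HasDerivAt (fun s => ω (x, s)) (fderiv ℝ ω (x, s) (0, 1)) s :=
      fun s _ => by
        have h := ((hω.differentiable (by simp) (x, s)).hasFDerivAt).comp_hasDerivAt s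
          ((hasDerivAt_const s x).prodMk (hasDerivAt_id s))
        simpa [Function.comp_def] using h
    have hcont : Continuous fun s => fderiv ℝ ω (x, s) (0, 1) :=
      (((hω.continuous_fderiv (by simp)).clm_apply continuous_const).comp (continuous_const.prodMk continuous_id))
    have hftc := intervalIntegral.integral_eq_sub_of_hasDerivAt hder
      (hcont.continuousOn.intervalIntegrable)
    calc (ω (x, t₂) - ω (x, t₁)) * φ x
        = (∫ s in t₁..t₂, fderiv ℝ ω (x, s) (0, 1)) * φ x := by rw [hftc]
      _ = ∫ s in t₁..t₂, fderiv ℝ ω (x, s) (0, 1) * φ x := by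
          rw [intervalIntegral.integral_mul_const]
      _ = ∫ s, A (x, s) ∂κ := by rw [intervalIntegral.integral_of_le ht₁₂]
  -- Fubini
  have hAint : Integrable A (volume.prod κ) :=
    integrable_prod_aux hAcont hφc (fun z hz => by simp [hAdef, hφz z.1 hz]) t₁ t₂
  have hswap : ∫ x : E2, (∫ s, A (x, s) ∂κ) = ∫ s, (∫ x, A (x, s)) ∂κ :=
    integral_integral_swap hAint
  -- ∫ₓ U and ∫ₓ G as continuous functions of time
  have hUzero : ∀ s : ℝ, ∀ x, x ∉ closure Ω → U (x, s) = 0 := by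
    intro s x hx
    have : x ∉ K := fun h => hx (subset_closure (hφsupp h))
    simp [hUdef, hφdz x this]
  have hGzero : ∀ s : ℝ, ∀ x, x ∉ closure Ω → G (x, s) = 0 := by
    intro s x hx
    have : x ∉ K := fun h => hx (subset_closure (hφsupp h))
    simp [hGdef, hφz x this]
  have hUeq : ∀ s : ℝ, ∫ x, U (x, s) = ∫ x in closure Ω, U (x, s) :=
    fun s => (setIntegral_eq_integral_of_forall_compl_eq_zero (hUzero s)).symm
  have hGeq : ∀ s : ℝ, ∫ x, G (x, s) = ∫ x in closure Ω, G (x, s) :=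
    fun s => (setIntegral_eq_integral_of_forall_compl_eq_zero (hGzero s)).symm
  have hUtc : Continuous fun s => ∫ x, U (x, s) := by
    simp only [hUeq]
    exact continuous_param hUcont measurableSet_closure hΩbdd.closure
  have hGtc : Continuous fun s => ∫ x, G (x, s) := by
    simp only [hGeq]
    exact continuous_param hGcont measurableSet_closure hΩbdd.closure
  have hUκ : Integrable (fun s => ∫ x, U (x, s)) κ := hUtc.integrableOn_Ioc
  have hGκ : Integrable (fun s => ∫ x, G (x, s)) κ := hGtc.integrableOn_Ioc
  -- a.e. split
  have hsplit : ∫ s, (∫ x, A (x, s)) ∂κ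
      = (∫ s, (∫ x, U (x, s)) ∂κ) + ∫ s, (∫ x, G (x, s)) ∂κ := by
    rw [← integral_add hUκ hGκ]
    apply integral_congr_ae
    have hne : ∀ᵐ s ∂κ, s ≠ T :=
      ((Set.countable_singleton T).ae_notMem volume).filter_mono (ae_mono Measure.restrict_le_self)
    filter_upwards [ae_restrict_mem measurableSet_Ioc, hne] with s hs hsT
    have hsIoo : s ∈ Ioo (0:ℝ) T := ⟨lt_of_le_of_lt ht₁ hs.1, lt_of_le_of_ne (hs.2.trans ht₂) hsT⟩
    exact key s hsIoo
  -- measure of the time interval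
  haveI hκfin : IsFiniteMeasure κ := by rw [hκdef]; infer_instance
  have hκuniv : (κ Set.univ).toReal = t₂ - t₁ := by
    rw [hκdef, Measure.restrict_apply_univ, Real.volume_Ioc, ENNReal.toReal_ofReal (by linarith)]
  -- MemLp helper on Ω
  have memLp_x : ∀ (F : E2 → ℝ) (r : ENNReal), Continuous F → MemLp F r (volume.restrict Ω) := by
    intro F r hF
    obtain ⟨C, hC⟩ := hΩbdd.isCompact_closure.exists_bound_of_continuousOn hF.continuousOn
    refine MemLp.of_bound hF.aestronglyMeasurable.restrict C ?_
    filter_upwards [ae_restrict_mem hΩopen.measurableSet] with x hx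
    exact hC x (subset_closure hx)
  have holder_x : ∀ (f h : E2 → ℝ), Continuous f → Continuous h → (∀ x, 0 ≤ f x) →
      (∀ x, 0 ≤ h x) →
      ∫ x in Ω, f x * h x ≤ (∫ x in Ω, f x ^ p) ^ (1/p) * (∫ x in Ω, h x ^ q) ^ (1/q) :=
    fun f h hf hh hf0 hh0 =>
      integral_mul_le_Lp_mul_Lq_of_nonneg hpq (.of_forall hf0) (.of_forall hh0)
        (memLp_x f _ hf) (memLp_x h _ hh)
  -- the sup quantities
  set Su := ⨆ t ∈ Set.Icc (0:ℝ) T, (∫ x in Ω, ‖u (x, t)‖ ^ q) ^ (1/q) with hSu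
  set Sφ := ⨆ x ∈ Ω, ‖gradient φ x‖ with hSφ
  set Sω := ⨆ t ∈ Set.Icc (0:ℝ) T, (∫ x in Ω, |ω (x, t)| ^ p) ^ (1/p) with hSω
  obtain ⟨Cu, hCu⟩ := sup_bound hu.continuous.norm (fun z => norm_nonneg _)
    hΩopen.measurableSet hΩbdd 0 T q hq0
  obtain ⟨Cw, hCw⟩ := sup_bound hω.continuous.abs (fun z => abs_nonneg _)
    hΩopen.measurableSet hΩbdd 0 T p hp0
  have hu_le : ∀ s ∈ Icc (0:ℝ) T, (∫ x in Ω, ‖u (x, s)‖ ^ q) ^ (1/q) ≤ Su :=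
    fun s hs => real_le_biSup hCu hs
  have hω_le : ∀ s ∈ Icc (0:ℝ) T, (∫ x in Ω, |ω (x, s)| ^ p) ^ (1/p) ≤ Sω :=
    fun s hs => real_le_biSup hCw hs
  have hSu0 : 0 ≤ Su := real_biSup_nonneg fun t _ => Real.rpow_nonneg
    (setIntegral_nonneg hΩopen.measurableSet fun x _ => Real.rpow_nonneg (norm_nonneg _) _) _
  have hSω0 : 0 ≤ Sω := real_biSup_nonneg fun t _ => Real.rpow_nonneg
    (setIntegral_nonneg hΩopen.measurableSet fun x _ => Real.rpow_nonneg (abs_nonneg _) _) _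
  have hSφ0 : 0 ≤ Sφ := real_biSup_nonneg fun x _ => norm_nonneg _
  -- gradient sup bound
  obtain ⟨Cg, hCg⟩ := hφc.exists_bound_of_continuousOn (continuous_gradient hφ).continuousOn
  have hgrad_ub : ∀ x, ‖gradient φ x‖ ≤ max Cg 0 := by
    intro x
    by_cases hx : x ∈ K
    · exact le_max_of_le_left (hCg x hx)
    · rw [hgradz x hx]; simp
  have hgrad_le : ∀ x ∈ Ω, ‖gradient φ x‖ ≤ Sφ := fun x hx =>
    real_le_biSup (fun y _ => hgrad_ub y) hx
  -- pointwise-in-time bound for the U term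
  have hUb : ∀ s ∈ Ioc t₁ t₂, ‖∫ x, U (x, s)‖ ≤ Sφ * (Sω * Su) := by
    intro s hs
    have hsIcc : s ∈ Icc (0:ℝ) T := ⟨le_of_lt (lt_of_le_of_lt ht₁ hs.1), hs.2.trans ht₂⟩
    have hUΩ : ∫ x, U (x, s) = ∫ x in Ω, U (x, s) :=
      (setIntegral_eq_integral_of_forall_compl_eq_zero (fun x hx => by
        have hxK : x ∉ K := fun h => hx (hφsupp h)
        simp [hUdef, hφdz x hxK])).symm
    rw [hUΩ, Real.norm_eq_abs]
    calc |∫ x in Ω, U (x, s)| ≤ ∫ x in Ω, |U (x, s)| := by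
          simpa [Real.norm_eq_abs] using
            norm_integral_le_integral_norm (μ := volume.restrict Ω) (fun x => U (x, s))
      _ ≤ ∫ x in Ω, Sφ * (|ω (x, s)| * ‖u (x, s)‖) := by
          apply setIntegral_mono_on
          · exact integrableOn_of_continuous
              (hUcont.comp (continuous_id.prodMk continuous_const)).abs hΩbdd
          · exact integrableOn_of_continuous (continuous_const.mul
              (((hω.continuous.comp (continuous_id.prodMk continuous_const)).abs).mul
                (hu.continuous.comp (continuous_id.prodMk continuous_const)).norm)) hΩbdd
          · exact hΩopen.measurableSet
          · intro x hx
            calc |U (x, s)| = |ω (x, s)| * |fderiv ℝ φ x (u (x, s))| := by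
                  simp only [hUdef]; exact abs_mul _ _
              _ ≤ |ω (x, s)| * (Sφ * ‖u (x, s)‖) := by
                  refine mul_le_mul_of_nonneg_left ?_ (abs_nonneg _)
                  exact le_trans (abs_fderiv_le_gradient φ x _)
                    (mul_le_mul_of_nonneg_right (hgrad_le x hx) (norm_nonneg _))
              _ = Sφ * (|ω (x, s)| * ‖u (x, s)‖) := by ring
      _ = Sφ * ∫ x in Ω, |ω (x, s)| * ‖u (x, s)‖ := integral_const_mul _ _
      _ ≤ Sφ * ((∫ x in Ω, |ω (x, s)| ^ p) ^ (1/p) * (∫ x in Ω, ‖u (x, s)‖ ^ q) ^ (1/q)) := by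
          refine mul_le_mul_of_nonneg_left ?_ hSφ0
          exact holder_x _ _ ((hω.continuous.comp (continuous_id.prodMk continuous_const)).abs)
            ((hu.continuous.comp (continuous_id.prodMk continuous_const)).norm)
            (fun x => abs_nonneg _) (fun x => norm_nonneg _)
      _ ≤ Sφ * (Sω * Su) := by
          refine mul_le_mul_of_nonneg_left ?_ hSφ0
          exact mul_le_mul (hω_le s hsIcc) (hu_le s hsIcc)
            (Real.rpow_nonneg (setIntegral_nonneg hΩopen.measurableSet
              fun x _ => Real.rpow_nonneg (norm_nonneg _) _) _) hSω0
  have hTerm1 : ‖∫ s, (∫ x, U (x, s)) ∂κ‖ ≤ Sφ * (Sω * Su) * (t₂ - t₁) := by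
    have hb : ∀ᵐ s ∂κ, ‖∫ x, U (x, s)‖ ≤ Sφ * (Sω * Su) := by
      rw [hκdef]
      filter_upwards [ae_restrict_mem measurableSet_Ioc] with s hs using hUb s hs
    have h := norm_integral_le_of_norm_le_const hb
    rwa [measureReal_def, hκuniv] at h
  -- the G term
  set Q := (∫ x in Ω, |φ x| ^ q) ^ (1/q) with hQ
  have hQ0 : 0 ≤ Q := Real.rpow_nonneg (setIntegral_nonneg hΩopen.measurableSet
    fun x _ => Real.rpow_nonneg (abs_nonneg _) _) _
  set fg : ℝ → ℝ := fun s => (∫ x in Ω, |g (x, s)| ^ p) ^ (1/p) with hfg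
  have hbase_cont : Continuous fun s => ∫ x in Ω, |g (x, s)| ^ p :=
    continuous_param ((hg.continuous.abs).rpow_const (fun z => Or.inr hp0.le))
      hΩopen.measurableSet hΩbdd
  have hfg_cont : Continuous fg := hbase_cont.rpow_const (fun s => Or.inr (by positivity))
  have hfg0 : ∀ s, 0 ≤ fg s := fun s => Real.rpow_nonneg (setIntegral_nonneg
    hΩopen.measurableSet fun x _ => Real.rpow_nonneg (abs_nonneg _) _) _
  have hGb : ∀ s : ℝ, ‖∫ x, G (x, s)‖ ≤ fg s * Q := by
    intro s
    have hGΩ : ∫ x, G (x, s) = ∫ x in Ω, G (x, s) :=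
      (setIntegral_eq_integral_of_forall_compl_eq_zero (fun x hx => by
        have hxK : x ∉ K := fun h => hx (hφsupp h)
        simp [hGdef, hφz x hxK])).symm
    rw [hGΩ, Real.norm_eq_abs]
    calc |∫ x in Ω, G (x, s)| ≤ ∫ x in Ω, |G (x, s)| := by
          simpa [Real.norm_eq_abs] using
            norm_integral_le_integral_norm (μ := volume.restrict Ω) (fun x => G (x, s))
      _ = ∫ x in Ω, |g (x, s)| * |φ x| := by
          congr 1; funext x; simp only [hGdef]; exact abs_mul _ _
      _ ≤ fg s * Q :=
          holder_x _ _ ((hg.continuous.comp (continuous_id.prodMk continuous_const)).abs)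
            hφ.continuous.abs (fun x => abs_nonneg _) (fun x => abs_nonneg _)
  have hfgκ : MemLp fg (ENNReal.ofReal p) κ := by
    obtain ⟨C, hC⟩ := (isCompact_Icc (a := t₁) (b := t₂)).exists_bound_of_continuousOn
      hfg_cont.continuousOn
    refine MemLp.of_bound hfg_cont.aestronglyMeasurable.restrict C ?_
    rw [hκdef]
    filter_upwards [ae_restrict_mem measurableSet_Ioc] with s hs
    exact hC s (Ioc_subset_Icc_self hs)
  have hHt : ∫ s, fg s ∂κ ≤ (∫ s, fg s ^ p ∂κ) ^ (1/p) * (t₂ - t₁) ^ (1/q) := by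
    have h1 : ∫ s, fg s * 1 ∂κ ≤ (∫ s, fg s ^ p ∂κ) ^ (1/p) * (∫ s, (1:ℝ) ^ q ∂κ) ^ (1/q) :=
      integral_mul_le_Lp_mul_Lq_of_nonneg hpq (.of_forall hfg0)
        (.of_forall fun _ => zero_le_one) hfgκ (memLp_const 1)
    simpa [mul_one, Real.one_rpow, integral_const, measureReal_def, hκuniv, smul_eq_mul] using h1
  have hbase_mono : ∫ s, fg s ^ p ∂κ ≤ ∫ s in (0:ℝ)..T, ∫ x in Ω, |g (x, s)| ^ p := by
    have hrw : ∀ s : ℝ, fg s ^ p = ∫ x in Ω, |g (x, s)| ^ p := by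
      intro s
      rw [hfg, one_div, Real.rpow_inv_rpow (setIntegral_nonneg hΩopen.measurableSet
        fun x _ => Real.rpow_nonneg (abs_nonneg _) _) hp0.ne']
    rw [intervalIntegral.integral_of_le hT.le]
    simp only [hrw, hκdef]
    apply setIntegral_mono_set
    · exact hbase_cont.integrableOn_Ioc
    · exact .of_forall fun s => setIntegral_nonneg hΩopen.measurableSet
        fun x _ => Real.rpow_nonneg (abs_nonneg _) _
    · exact (Ioc_subset_Ioc ht₁ ht₂).eventuallyLE
  have hTerm2 : ‖∫ s, (∫ x, G (x, s)) ∂κ‖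
      ≤ (t₂ - t₁) ^ (1/q) * (∫ s in (0:ℝ)..T, ∫ x in Ω, |g (x, s)| ^ p) ^ (1/p) * Q := by
    calc ‖∫ s, (∫ x, G (x, s)) ∂κ‖ ≤ ∫ s, ‖∫ x, G (x, s)‖ ∂κ :=
          norm_integral_le_integral_norm _
      _ ≤ ∫ s, fg s * Q ∂κ := by
          refine integral_mono hGtc.norm.integrableOn_Ioc
            ((hfg_cont.mul continuous_const).integrableOn_Ioc) (fun s => hGb s)
      _ = (∫ s, fg s ∂κ) * Q := integral_mul_const _ _
      _ ≤ ((∫ s, fg s ^ p ∂κ) ^ (1/p) * (t₂ - t₁) ^ (1/q)) * Q :=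
          mul_le_mul_of_nonneg_right hHt hQ0
      _ ≤ ((∫ s in (0:ℝ)..T, ∫ x in Ω, |g (x, s)| ^ p) ^ (1/p) * (t₂ - t₁) ^ (1/q)) * Q := by
          refine mul_le_mul_of_nonneg_right (mul_le_mul_of_nonneg_right ?_
            (Real.rpow_nonneg (by linarith) _)) hQ0
          exact Real.rpow_le_rpow (integral_nonneg fun s => Real.rpow_nonneg (hfg0 s) _)
            hbase_mono (by positivity)
      _ = (t₂ - t₁) ^ (1/q) * (∫ s in (0:ℝ)..T, ∫ x in Ω, |g (x, s)| ^ p) ^ (1/p) * Q := by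
          ring
  -- assemble
  have hLrw : ∫ x in Ω, (ω (x, t₂) - ω (x, t₁)) * φ x
      = (∫ s, (∫ x, U (x, s)) ∂κ) + ∫ s, (∫ x, G (x, s)) ∂κ := by
    rw [setIntegral_eq_integral_of_forall_compl_eq_zero (fun x hx => by
      have hxK : x ∉ K := fun h => hx (hφsupp h)
      rw [hφz x hxK, mul_zero])]
    calc ∫ x : E2, (ω (x, t₂) - ω (x, t₁)) * φ x = ∫ x : E2, (∫ s, A (x, s) ∂κ) := by
          congr 1; funext x; exact h1 x
      _ = ∫ s, (∫ x, A (x, s)) ∂κ := hswap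
      _ = _ := hsplit
  rw [hLrw]
  calc |(∫ s, (∫ x, U (x, s)) ∂κ) + ∫ s, (∫ x, G (x, s)) ∂κ|
      ≤ |∫ s, (∫ x, U (x, s)) ∂κ| + |∫ s, (∫ x, G (x, s)) ∂κ| := abs_add_le _ _
    _ ≤ Sφ * (Sω * Su) * (t₂ - t₁)
        + (t₂ - t₁) ^ (1/q) * (∫ s in (0:ℝ)..T, ∫ x in Ω, |g (x, s)| ^ p) ^ (1/p) * Q :=
        add_le_add hTerm1 hTerm2
    _ = (t₂ - t₁) * Su * Sφ * Sω
        + (t₂ - t₁) ^ (1/q) * (∫ s in (0:ℝ)..T, ∫ x in Ω, |g (x, s)| ^ p) ^ (1/p) * Q := by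
        ring

end
end

section
/- Let T > 0 and K ≥ 0. Let Y : [0,T] → ℝ be continuous with Y(0) = 0 and 0 ≤ Y(t) ≤ 1 for all t ∈ [0,T], differentiable on (0,T), and suppose that for every p ∈ [2,∞) and every t ∈ (0,T) one has Y'(t) ≤ K p Y(t)^{1 − 1/p}. Then Y(t) = 0 for all t ∈ [0,T]. -/
open Set

/-- Osgood/Yudovich-type ODE lemma. If `Y : [0,T] → [0,1]` is continuous,
vanishes at `0`, is differentiable on `(0,T)`, and satisfies
`Y'(t) ≤ K p Y(t)^{1 − 1/p}` for every `p ∈ [2,∞)` and `t ∈ (0,T)`, then `Y ≡ 0`. -/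
theorem stmt7 (T K : ℝ) (hT : 0 < T) (hK : 0 ≤ K) (Y : ℝ → ℝ)
    (hcont : ContinuousOn Y (Set.Icc 0 T)) (h0 : Y 0 = 0)
    (hbd : ∀ t ∈ Set.Icc (0:ℝ) T, 0 ≤ Y t ∧ Y t ≤ 1)
    (hdiff : ∀ t ∈ Set.Ioo (0:ℝ) T, DifferentiableAt ℝ Y t)
    (hineq : ∀ p : ℝ, 2 ≤ p → ∀ t ∈ Set.Ioo (0:ℝ) T,
      deriv Y t ≤ K * p * Y t ^ (1 - 1/p)) :
    ∀ t ∈ Set.Icc (0:ℝ) T, Y t = 0 := by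
  -- Step lemma: zero set propagates by steps of size controlled by `K`.
  have step : ∀ a b : ℝ, 0 ≤ a → a < b → b ≤ T → Y a = 0 → K * (b - a) ≤ 1/2 →
      Y b = 0 := by
    intro a b ha hab hbT hYa hKab
    have hYb0 : 0 ≤ Y b := (hbd b ⟨le_trans ha hab.le, hbT⟩).1
    -- main estimate via mean value theorem applied to `(Y + ε) ^ (1/p)`
    have key : ∀ p : ℝ, 2 ≤ p → ∀ ε : ℝ, 0 < ε →
        (Y b + ε) ^ (1/p) ≤ ε ^ (1/p) + K * (b - a) := by
      intro p hp ε hε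
      have hp0 : (0:ℝ) < p := lt_of_lt_of_le two_pos hp
      set W : ℝ → ℝ := fun t => (Y t + ε) ^ (1/p) with hWdef
      set W' : ℝ → ℝ := fun t => deriv Y t * (1/p) * (Y t + ε) ^ (1/p - 1) with hW'def
      have hWd : ∀ x ∈ Ioo a b, HasDerivAt W (W' x) x := by
        intro x hx
        have hx' : x ∈ Ioo (0:ℝ) T := ⟨lt_of_le_of_lt ha hx.1, lt_of_lt_of_le hx.2 hbT⟩
        have h1 : HasDerivAt (fun t => Y t + ε) (deriv Y x) x :=
          ((hdiff x hx').hasDerivAt).add_const ε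
        have hne : Y x + ε ≠ 0 := by
          have := (hbd x ⟨hx'.1.le, hx'.2.le⟩).1; positivity
        exact h1.rpow_const (Or.inl hne)
      have hWc : ContinuousOn W (Icc a b) := by
        apply ContinuousOn.rpow_const
        · exact (hcont.mono (Icc_subset_Icc ha hbT)).add continuousOn_const
        · intro x hx
          have := (hbd x ⟨le_trans ha hx.1, le_trans hx.2 hbT⟩).1
          left; positivity
      obtain ⟨x, hx, hslope⟩ := exists_hasDerivAt_eq_slope W W' hab hWc hWd
      have hx' : x ∈ Ioo (0:ℝ) T := ⟨lt_of_le_of_lt ha hx.1, lt_of_lt_of_le hx.2 hbT⟩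
      have hYx : 0 ≤ Y x := (hbd x ⟨hx'.1.le, hx'.2.le⟩).1
      have hYxε : (0:ℝ) < Y x + ε := by positivity
      -- bound the derivative of W by K
      have hbound : W' x ≤ K := by
        have hd := hineq p hp x hx'
        have hmono : Y x ^ (1 - 1/p) ≤ (Y x + ε) ^ (1 - 1/p) := by
          apply Real.rpow_le_rpow hYx (by linarith)
          have : 1/p ≤ 1/2 := by
            rw [div_le_div_iff₀ hp0 two_pos]; linarith
          linarith
        have hpow : (0:ℝ) < (Y x + ε) ^ (1/p - 1) := Real.rpow_pos_of_pos hYxε _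
        have h2 : W' x ≤ K * p * (Y x + ε) ^ (1 - 1/p) * (1/p) * (Y x + ε) ^ (1/p - 1) := by
          rw [hW'def]
          calc deriv Y x * (1/p) * (Y x + ε) ^ (1/p - 1)
              ≤ (K * p * Y x ^ (1 - 1/p)) * (1/p) * (Y x + ε) ^ (1/p - 1) := by
                apply mul_le_mul_of_nonneg_right _ hpow.le
                apply mul_le_mul_of_nonneg_right hd (by positivity)
            _ ≤ (K * p * (Y x + ε) ^ (1 - 1/p)) * (1/p) * (Y x + ε) ^ (1/p - 1) := by
                apply mul_le_mul_of_nonneg_right _ hpow.le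
                apply mul_le_mul_of_nonneg_right _ (by positivity)
                apply mul_le_mul_of_nonneg_left hmono (by positivity)
            _ = K * p * (Y x + ε) ^ (1 - 1/p) * (1/p) * (Y x + ε) ^ (1/p - 1) := by ring
        have h3 : (Y x + ε) ^ (1 - 1/p) * (Y x + ε) ^ (1/p - 1) = 1 := by
          rw [← Real.rpow_add hYxε]
          norm_num
        calc W' x ≤ K * p * (Y x + ε) ^ (1 - 1/p) * (1/p) * (Y x + ε) ^ (1/p - 1) := h2
          _ = K * (p * (1/p)) * ((Y x + ε) ^ (1 - 1/p) * (Y x + ε) ^ (1/p - 1)) := by ring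
          _ = K := by rw [h3, mul_one_div_cancel hp0.ne']; ring
      -- convert slope bound into the estimate
      have hba : (0:ℝ) < b - a := by linarith
      have hWb : W b - W a ≤ K * (b - a) := by
        have := hslope ▸ hbound
        rw [div_le_iff₀ hba] at this
        linarith [this]
      have hWa : W a = ε ^ (1/p) := by
        rw [hWdef]; simp [hYa]
      have : W b ≤ ε ^ (1/p) + K * (b - a) := by rw [← hWa]; linarith
      simpa [hWdef] using this
    -- specialize: ε = (1/4)^p gives Y b ≤ (3/4)^p
    have hsmall : ∀ p : ℝ, 2 ≤ p → Y b ≤ (3/4 : ℝ) ^ p := by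
      intro p hp
      have hp0 : (0:ℝ) < p := lt_of_lt_of_le two_pos hp
      have hε : (0:ℝ) < (1/4 : ℝ) ^ p := Real.rpow_pos_of_pos (by norm_num) _
      have h1 := key p hp ((1/4 : ℝ) ^ p) hε
      have hεp : ((1/4 : ℝ) ^ p) ^ (1/p) = 1/4 := by
        rw [← Real.rpow_mul (by norm_num), mul_one_div_cancel hp0.ne', Real.rpow_one]
      rw [hεp] at h1
      have h2 : (Y b + (1/4:ℝ)^p) ^ (1/p) ≤ 3/4 := le_trans h1 (by linarith)
      have h3 : Y b + (1/4:ℝ)^p ≤ (3/4:ℝ) ^ p := by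
        have := Real.rpow_le_rpow (Real.rpow_nonneg (by positivity) _) h2 hp0.le
        rwa [← Real.rpow_mul (by positivity), one_div_mul_cancel hp0.ne',
          Real.rpow_one] at this
      linarith
    -- conclude Y b ≤ 0
    have hle : Y b ≤ 0 := by
      by_contra hpos
      push_neg at hpos
      obtain ⟨n, hn⟩ := exists_pow_lt_of_lt_one hpos (by norm_num : (3/4:ℝ) < 1)
      have h2 : (2:ℝ) ≤ ((n + 2 : ℕ) : ℝ) := by push_cast; linarith [Nat.cast_nonneg (α := ℝ) n]
      have := hsmall ((n + 2 : ℕ) : ℝ) h2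
      rw [Real.rpow_natCast] at this
      have h3 : (3/4:ℝ) ^ (n + 2) ≤ (3/4:ℝ) ^ n :=
        pow_le_pow_of_le_one (by norm_num) (by norm_num) (by omega)
      linarith
    linarith
  -- bootstrap along a grid of step δ
  set δ : ℝ := 1/(2*(K+1)) with hδdef
  have hδpos : 0 < δ := by positivity
  have hKδ : K * δ ≤ 1/2 := by
    rw [hδdef, mul_one_div, div_le_div_iff₀ (by positivity) two_pos]; linarith
  have main : ∀ n : ℕ, ∀ t : ℝ, 0 ≤ t → t ≤ T → t ≤ n * δ → Y t = 0 := by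
    intro n
    induction n with
    | zero =>
      intro t ht htT hn
      simp only [Nat.cast_zero, zero_mul] at hn
      have : t = 0 := le_antisymm hn ht
      rw [this]; exact h0
    | succ n ih =>
      intro t ht htT hn
      by_cases hcase : t ≤ n * δ
      · exact ih t ht htT hcase
      · push_neg at hcase
        have ha0 : (0:ℝ) ≤ (n:ℝ) * δ := by positivity
        have hYa : Y ((n:ℝ) * δ) = 0 := ih _ ha0 (le_trans hcase.le htT) le_rfl
        apply step _ _ ha0 hcase htT hYa
        have htn : t - (n:ℝ) * δ ≤ δ := by
          push_cast at hn; linarith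
        calc K * (t - (n:ℝ)*δ) ≤ K * δ := mul_le_mul_of_nonneg_left htn hK
          _ ≤ 1/2 := hKδ
  intro t ht
  obtain ⟨n, hn⟩ := exists_nat_ge (T / δ)
  have hTn : T ≤ n * δ := by
    rw [div_le_iff₀ hδpos] at hn; linarith
  exact main n t ht.1 ht.2 (le_trans ht.2 hTn)
end

section
/- Let 0 ≤ ε < T, K ≥ 0, and M > 0. Let Y : [ε,T] → ℝ be continuous on [ε,T] and differentiable on (ε,T), with 0 < Y(t) < M for all t ∈ [ε,T], and suppose Y'(t) ≤ K Y(t) log(M / Y(t)) for all t ∈ (ε,T). Then for every t ∈ [ε,T]: Y(t) ≤ M · (Y(ε)/M)^{exp(−K(t−ε))}. -/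
open Set

/-- logarithmic Gronwall inequality. If `Y : [ε,T] → (0,M)` is continuous,
differentiable on `(ε,T)`, and `Y'(t) ≤ K Y(t) log(M/Y(t))` on `(ε,T)`, then
`Y(t) ≤ M (Y(ε)/M)^{exp(−K(t−ε))}` for all `t ∈ [ε,T]`. -/
theorem stmt8 (ε T K M : ℝ) (hε : 0 ≤ ε) (hεT : ε < T) (hK : 0 ≤ K) (hM : 0 < M)
    (Y : ℝ → ℝ)
    (hcont : ContinuousOn Y (Set.Icc ε T))
    (hdiff : ∀ t ∈ Set.Ioo ε T, DifferentiableAt ℝ Y t)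
    (hrange : ∀ t ∈ Set.Icc ε T, 0 < Y t ∧ Y t < M)
    (hineq : ∀ t ∈ Set.Ioo ε T, deriv Y t ≤ K * Y t * Real.log (M / Y t)) :
    ∀ t ∈ Set.Icc ε T, Y t ≤ M * (Y ε / M) ^ Real.exp (-K * (t - ε)) := by
  have hYpos : ∀ t ∈ Set.Icc ε T, 0 < Y t := fun t ht => (hrange t ht).1
  set h : ℝ → ℝ := fun t => Real.exp (K * (t - ε)) * (Real.log M - Real.log (Y t)) with hh
  -- derivative facts on the interior
  have hderiv : ∀ x ∈ Set.Ioo ε T, HasDerivAt h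
      (K * Real.exp (K * (x - ε)) * (Real.log M - Real.log (Y x))
        + Real.exp (K * (x - ε)) * (-(deriv Y x / Y x))) x := by
    intro x hx
    have hxI : x ∈ Set.Icc ε T := Set.mem_Icc_of_Ioo hx
    have hYx : Y x ≠ 0 := (hYpos x hxI).ne'
    have h1 : HasDerivAt (fun t => Real.exp (K * (t - ε))) (K * Real.exp (K * (x - ε))) x := by
      have : HasDerivAt (fun t : ℝ => K * (t - ε)) (K * 1) x :=
        ((hasDerivAt_id x).sub_const ε).const_mul K
      simpa [mul_comm] using this.exp
    have h2 : HasDerivAt (fun t => Real.log M - Real.log (Y t)) (-(deriv Y x / Y x)) x := by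
      have := (((hdiff x hx).hasDerivAt).log hYx).const_sub (Real.log M)
      simpa using this
    simpa [hh, Pi.mul_def] using h1.mul h2
  have hmono : MonotoneOn h (Set.Icc ε T) := by
    apply monotoneOn_of_deriv_nonneg (convex_Icc ε T)
    · exact ((Real.continuous_exp.comp (by continuity)).continuousOn).mul
        (continuousOn_const.sub (hcont.log (fun t ht => (hYpos t ht).ne')))
    · intro x hx
      rw [interior_Icc] at hx
      exact (hderiv x hx).differentiableAt.differentiableWithinAt
    · intro x hx
      rw [interior_Icc] at hx
      rw [(hderiv x hx).deriv]
      have hxI : x ∈ Set.Icc ε T := Set.mem_Icc_of_Ioo hx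
      have hYx : 0 < Y x := hYpos x hxI
      have hlog : Real.log (M / Y x) = Real.log M - Real.log (Y x) :=
        Real.log_div hM.ne' hYx.ne'
      have hi := hineq x hx
      rw [hlog] at hi
      have hdivle : deriv Y x / Y x ≤ K * (Real.log M - Real.log (Y x)) := by
        rw [div_le_iff₀ hYx]
        nlinarith
      have hepos : 0 < Real.exp (K * (x - ε)) := Real.exp_pos _
      nlinarith
  intro t ht
  have hεI : ε ∈ Set.Icc ε T := Set.left_mem_Icc.2 hεT.le
  have hle := hmono hεI ht ht.1
  have hhε : h ε = Real.log M - Real.log (Y ε) := by simp [hh]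
  rw [hhε] at hle
  set e := Real.exp (-K * (t - ε)) with he
  have hepos : 0 < e := Real.exp_pos _
  -- multiply hle by e
  have hprod : e * Real.exp (K * (t - ε)) = 1 := by
    rw [he, ← Real.exp_add]; ring_nf; exact Real.exp_zero
  have key : e * (Real.log M - Real.log (Y ε)) ≤ Real.log M - Real.log (Y t) := by
    calc e * (Real.log M - Real.log (Y ε))
        ≤ e * (Real.exp (K * (t - ε)) * (Real.log M - Real.log (Y t))) := by
          exact mul_le_mul_of_nonneg_left hle hepos.le
      _ = (e * Real.exp (K * (t - ε))) * (Real.log M - Real.log (Y t)) := by ring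
      _ = Real.log M - Real.log (Y t) := by rw [hprod, one_mul]
  have hYt : 0 < Y t := hYpos t ht
  have hYε : 0 < Y ε := hYpos ε hεI
  have hRHSpos : 0 < M * (Y ε / M) ^ e :=
    mul_pos hM (Real.rpow_pos_of_pos (div_pos hYε hM) e)
  rw [← Real.exp_log hYt, ← Real.exp_log hRHSpos]
  apply Real.exp_le_exp.2
  rw [Real.log_mul hM.ne' (Real.rpow_pos_of_pos (div_pos hYε hM) e).ne',
    Real.log_rpow (div_pos hYε hM), Real.log_div hYε.ne' hM.ne']
  nlinarith [key]
end

section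
/- Let T > 0, K ≥ 0, and M > 0. Let Y : [0,T] → ℝ be continuous and nonnegative with Y(0) = 0 and Y(t) < M for all t ∈ [0,T], differentiable on (0,T), and suppose that Y'(t) ≤ K Y(t) log(M / Y(t)) for every t ∈ (0,T) with Y(t) > 0. Then Y(t) = 0 for all t ∈ [0,T]. -/
open Set Filter Topology

/-- uniqueness via the logarithmic differential inequality. If
`Y : [0,T] → [0,M)` is continuous and nonnegative with `Y(0) = 0`, differentiable on
`(0,T)`, and `Y'(t) ≤ K Y(t) log(M/Y(t))` whenever `t ∈ (0,T)` and `Y(t) > 0`,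
then `Y ≡ 0` on `[0,T]`. -/
theorem stmt9 (T K M : ℝ) (hT : 0 < T) (hK : 0 ≤ K) (hM : 0 < M)
    (Y : ℝ → ℝ)
    (hcont : ContinuousOn Y (Set.Icc 0 T)) (h0 : Y 0 = 0)
    (hnonneg : ∀ t ∈ Set.Icc (0:ℝ) T, 0 ≤ Y t)
    (hlt : ∀ t ∈ Set.Icc (0:ℝ) T, Y t < M)
    (hdiff : ∀ t ∈ Set.Ioo (0:ℝ) T, DifferentiableAt ℝ Y t)
    (hineq : ∀ t ∈ Set.Ioo (0:ℝ) T, 0 < Y t →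
      deriv Y t ≤ K * Y t * Real.log (M / Y t)) :
    ∀ t ∈ Set.Icc (0:ℝ) T, Y t = 0 := by
  intro t₀ ht₀
  by_contra hne
  have hYt₀ : 0 < Y t₀ := lt_of_le_of_ne (hnonneg t₀ ht₀) (Ne.symm hne)
  have ht₀0 : 0 < t₀ := by
    rcases lt_or_eq_of_le ht₀.1 with h | h
    · exact h
    · exact absurd (h ▸ h0 : Y t₀ = 0) hne
  -- the last zero of Y before t₀
  set S : Set ℝ := Icc 0 t₀ ∩ Y ⁻¹' {0} with hSdef
  have hScl : IsClosed S := by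
    have hsub : Icc (0:ℝ) t₀ ⊆ Icc 0 T := Icc_subset_Icc le_rfl ht₀.2
    exact ContinuousOn.preimage_isClosed_of_isClosed (hcont.mono hsub)
      isClosed_Icc isClosed_singleton
  have hSne : S.Nonempty := ⟨0, ⟨le_rfl, le_of_lt ht₀0⟩, h0⟩
  have hSbdd : BddAbove S := ⟨t₀, fun x hx => hx.1.2⟩
  set s := sSup S with hsdef
  have hsS : s ∈ S := hScl.csSup_mem hSne hSbdd
  have hs0 : 0 ≤ s := hsS.1.1
  have hsle : s ≤ t₀ := hsS.1.2
  have hYs : Y s = 0 := hsS.2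
  have hst : s < t₀ := lt_of_le_of_ne hsle (fun heq => hne (heq ▸ hYs))
  have hIocsub : Ioc s t₀ ⊆ Icc 0 T := fun x hx =>
    ⟨le_trans hs0 (le_of_lt hx.1), le_trans hx.2 ht₀.2⟩
  have hpos : ∀ x ∈ Ioc s t₀, 0 < Y x := by
    intro x hx
    rcases lt_or_eq_of_le (hnonneg x (hIocsub hx)) with h | h
    · exact h
    · exfalso
      have hxS : x ∈ S := ⟨⟨le_trans hs0 (le_of_lt hx.1), hx.2⟩, h.symm⟩
      exact absurd (le_csSup hSbdd hxS) (not_le.mpr hx.1)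
  have hYM : ∀ x ∈ Ioc s t₀, Y x < M := fun x hx => hlt x (hIocsub hx)
  -- auxiliary functions
  set u : ℝ → ℝ := fun t => Real.log M - Real.log (Y t) with hudef
  have hupos : ∀ x ∈ Ioc s t₀, 0 < u x := by
    intro x hx
    have := Real.log_lt_log (hpos x hx) (hYM x hx)
    simp only [hudef]; linarith
  set h : ℝ → ℝ := fun t => Real.log (u t) + K * t with hhdef
  -- h is monotone on Ioc s t₀
  have hmono : MonotoneOn h (Ioc s t₀) := by
    have hconv : Convex ℝ (Ioc s t₀) := convex_Ioc s t₀
    have hYcont : ContinuousOn Y (Ioc s t₀) := hcont.mono hIocsub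
    have hucont : ContinuousOn u (Ioc s t₀) :=
      continuousOn_const.sub (hYcont.log (fun x hx => (hpos x hx).ne'))
    have hhcont : ContinuousOn h (Ioc s t₀) :=
      (hucont.log (fun x hx => (hupos x hx).ne')).add
        (continuousOn_const.mul continuousOn_id)
    have hint : interior (Ioc s t₀) = Ioo s t₀ := interior_Ioc
    have key : ∀ x ∈ Ioo s t₀, HasDerivAt h
        (-(deriv Y x / Y x) / u x + K * 1) x := by
      intro x hx
      have hxIoc : x ∈ Ioc s t₀ := ⟨hx.1, le_of_lt hx.2⟩
      have hxIoo : x ∈ Ioo (0:ℝ) T :=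
        ⟨lt_of_le_of_lt hs0 hx.1, lt_of_lt_of_le hx.2 ht₀.2⟩
      have hYx : 0 < Y x := hpos x hxIoc
      have hux : 0 < u x := hupos x hxIoc
      have hd : HasDerivAt Y (deriv Y x) x := (hdiff x hxIoo).hasDerivAt
      have h1 : HasDerivAt (fun t => Real.log (Y t)) (deriv Y x / Y x) x :=
        hd.log hYx.ne'
      have h2 : HasDerivAt u (-(deriv Y x / Y x)) x := h1.const_sub _
      have h3 : HasDerivAt (fun t => Real.log (u t))
          (-(deriv Y x / Y x) / u x) x := h2.log hux.ne'
      exact h3.add ((hasDerivAt_id x).const_mul K)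
    have hdiffOn : DifferentiableOn ℝ h (interior (Ioc s t₀)) := by
      rw [hint]; intro x hx
      exact ((key x hx).differentiableAt).differentiableWithinAt
    apply monotoneOn_of_deriv_nonneg hconv hhcont hdiffOn
    intro x hx
    rw [hint] at hx
    rw [(key x hx).deriv]
    have hxIoc : x ∈ Ioc s t₀ := ⟨hx.1, le_of_lt hx.2⟩
    have hxIoo : x ∈ Ioo (0:ℝ) T :=
      ⟨lt_of_le_of_lt hs0 hx.1, lt_of_lt_of_le hx.2 ht₀.2⟩
    have hYx : 0 < Y x := hpos x hxIoc
    have hux : 0 < u x := hupos x hxIoc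
    have hiq := hineq x hxIoo hYx
    rw [Real.log_div hM.ne' hYx.ne'] at hiq
    have hiq' : deriv Y x ≤ K * Y x * u x := hiq
    have hdiv : deriv Y x / (Y x * u x) ≤ K := by
      rw [div_le_iff₀ (by positivity)]
      nlinarith
    have : -(deriv Y x / Y x) / u x = -(deriv Y x / (Y x * u x)) := by
      field_simp
    rw [this]
    linarith
  -- uniform lower bound for Y on Ioc s t₀
  set B : ℝ := Real.log (u t₀) + K * t₀ with hBdef
  set ε : ℝ := Real.exp (Real.log M - Real.exp B) with hεdef
  have hεpos : 0 < ε := Real.exp_pos _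
  have hlow : ∀ x ∈ Ioc s t₀, ε ≤ Y x := by
    intro x hx
    have ht₀mem : t₀ ∈ Ioc s t₀ := ⟨hst, le_rfl⟩
    have h1 : h x ≤ h t₀ := hmono hx ht₀mem hx.2
    have hx0 : 0 < x := lt_of_le_of_lt hs0 hx.1
    have h2 : Real.log (u x) ≤ B := by
      have : 0 ≤ K * x := by positivity
      simp only [hhdef, hBdef] at h1 ⊢
      nlinarith [mul_le_mul_of_nonneg_left hx.2 hK]
    have hux : 0 < u x := hupos x hx
    have h3 : u x ≤ Real.exp B := by
      calc u x = Real.exp (Real.log (u x)) := (Real.exp_log hux).symm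
        _ ≤ Real.exp B := Real.exp_le_exp.mpr h2
    have h4 : Real.log M - Real.exp B ≤ Real.log (Y x) := by
      simp only [hudef] at h3; linarith
    calc ε ≤ Real.exp (Real.log (Y x)) := Real.exp_le_exp.mpr h4
      _ = Y x := Real.exp_log (hpos x hx)
  -- contradiction via continuity at s
  have hsT : s ∈ Icc (0:ℝ) T := ⟨hs0, le_trans hsle ht₀.2⟩
  have htend : Tendsto Y (𝓝[Icc (0:ℝ) T] s) (𝓝 0) := by
    have := hcont s hsT
    rwa [ContinuousWithinAt, hYs] at this
  have htend2 : Tendsto Y (𝓝[Ioc s t₀] s) (𝓝 0) :=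
    htend.mono_left (nhdsWithin_mono _ hIocsub)
  have hev : ∀ᶠ x in 𝓝[Ioc s t₀] s, Y x < ε :=
    htend2.eventually_lt_const hεpos
  have hnebot : (𝓝[Ioc s t₀] s).NeBot := by
    rw [nhdsWithin_Ioc_eq_nhdsGT hst]
    infer_instance
  rcases (hev.and self_mem_nhdsWithin).exists with ⟨x, hx1, hx2⟩
  exact absurd (hlow x hx2) (not_le.mpr hx1)
end

section
/- For a locally integrable function f : ℝ² → ℝ define ‖f‖_{bmo} = sup over axis-parallel open squares Q ⊂ ℝ² with area |Q| < 1 of (1/|Q|)∫_Q |f − f_Q| dx, plus sup over axis-parallel open squares Q with |Q| ≥ 1 of (1/|Q|)∫_Q |f| dx, where f_Q = (1/|Q|)∫_Q f dx. Let f : ℝ² → ℝ be locally integrable with f = 0 almost everywhere on the half-plane {(x₁,x₂) : x₁ < 0} and ‖f‖_{bmo} < ∞. Define the odd reflection h(x₁,x₂) = sign(x₁) · f(|x₁|, x₂). Then ‖h‖_{bmo} ≤ 2 ‖f‖_{bmo}. -/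
open Set MeasureTheory

/-- The axis-parallel open square with lower-left corner `(a, b)` and side length `ℓ`. -/
def openSquare (a b ℓ : ℝ) : Set (ℝ × ℝ) := Set.Ioo a (a + ℓ) ×ˢ Set.Ioo b (b + ℓ)

/-- The (local) `bmo` norm of `f : ℝ² → ℝ`, valued in `ℝ≥0∞`: the supremum over
axis-parallel open squares `Q` of area `|Q| = ℓ² < 1` of the mean oscillation
`|Q|⁻¹ ∫_Q |f − f_Q|`, plus the supremum over squares of area `≥ 1` of `|Q|⁻¹ ∫_Q |f|`. -/
noncomputable def bmoNorm (f : ℝ × ℝ → ℝ) : ENNReal :=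
  (⨆ (a : ℝ) (b : ℝ) (ℓ : ℝ) (_ : 0 < ℓ) (_ : ℓ ^ 2 < 1),
      ENNReal.ofReal ((ℓ ^ 2)⁻¹) *
        ∫⁻ x in openSquare a b ℓ, ENNReal.ofReal |f x - ⨍ y in openSquare a b ℓ, f y|)
  + (⨆ (a : ℝ) (b : ℝ) (ℓ : ℝ) (_ : 0 < ℓ) (_ : 1 ≤ ℓ ^ 2),
      ENNReal.ofReal ((ℓ ^ 2)⁻¹) *
        ∫⁻ x in openSquare a b ℓ, ENNReal.ofReal |f x|)

namespace Stmt10Aux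

/-- Reflection in the first coordinate. -/
def refl2 : ℝ × ℝ → ℝ × ℝ := fun x => (-x.1, x.2)

lemma refl2_involutive : Function.Involutive refl2 := fun x => by simp [refl2]

lemma refl2_measurable : Measurable refl2 :=
  (measurable_fst.neg).prodMk measurable_snd

lemma refl2_emb : MeasurableEmbedding refl2 :=
  (MeasurableEquiv.ofInvolutive refl2 refl2_involutive refl2_measurable).measurableEmbedding

lemma refl2_mp : MeasurePreserving refl2 (volume : Measure (ℝ × ℝ)) volume := by
  have h : MeasurePreserving (Prod.map (fun x : ℝ => -x) (id : ℝ → ℝ))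
      ((volume : Measure ℝ).prod volume) ((volume : Measure ℝ).prod volume) :=
    (Measure.measurePreserving_neg (volume : Measure ℝ)).prod (MeasurePreserving.id volume)
  rw [← Measure.volume_eq_prod] at h
  exact h

lemma refl2_preimage (a b ℓ : ℝ) :
    refl2 ⁻¹' openSquare (-a - ℓ) b ℓ = openSquare a b ℓ := by
  ext x
  simp only [openSquare, refl2, Set.mem_preimage, Set.mem_prod, Set.mem_Ioo]
  constructor
  · rintro ⟨⟨h1, h2⟩, h3⟩
    exact ⟨⟨by linarith, by linarith⟩, h3⟩
  · rintro ⟨⟨h1, h2⟩, h3⟩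
    exact ⟨⟨by linarith, by linarith⟩, h3⟩

lemma measurableSet_openSquare (a b ℓ : ℝ) : MeasurableSet (openSquare a b ℓ) :=
  measurableSet_Ioo.prod measurableSet_Ioo

lemma volume_openSquare (a b ℓ : ℝ) :
    volume (openSquare a b ℓ) = ENNReal.ofReal ℓ * ENNReal.ofReal ℓ := by
  rw [openSquare, Measure.volume_eq_prod, Measure.prod_prod, Real.volume_Ioo, Real.volume_Ioo,
    add_sub_cancel_left, add_sub_cancel_left]

lemma integrableOn_openSquare {f : ℝ × ℝ → ℝ} (hf : LocallyIntegrable f) (a b ℓ : ℝ) :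
    IntegrableOn f (openSquare a b ℓ) volume := by
  have h : IntegrableOn f (Icc a (a + ℓ) ×ˢ Icc b (b + ℓ)) volume :=
    hf.integrableOn_isCompact (isCompact_Icc.prod isCompact_Icc)
  exact h.mono_set (Set.prod_mono Set.Ioo_subset_Icc_self Set.Ioo_subset_Icc_self)

/-- a.e., the odd reflection equals `f x - f (refl2 x)`. -/
lemma odd_ae (f : ℝ × ℝ → ℝ) (hzero : ∀ᵐ x : ℝ × ℝ, x.1 < 0 → f x = 0) :
    (fun x : ℝ × ℝ => Real.sign x.1 * f (|x.1|, x.2))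
      =ᵐ[volume] fun x => f x - f (refl2 x) := by
  have h0 : (volume : Measure (ℝ × ℝ)) {x : ℝ × ℝ | x.1 = 0} = 0 := by
    have he : {x : ℝ × ℝ | x.1 = 0} = ({0} : Set ℝ) ×ˢ (Set.univ : Set ℝ) := by
      ext x
      simp only [Set.mem_setOf_eq, Set.mem_prod, Set.mem_singleton_iff, Set.mem_univ, and_true]
    rw [he, Measure.volume_eq_prod, Measure.prod_prod]
    simp
  have h1 : ∀ᵐ x : ℝ × ℝ, 0 < x.1 → f (refl2 x) = 0 := by
    have := refl2_mp.quasiMeasurePreserving.ae hzero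
    filter_upwards [this] with x hx hpos
    exact hx (by simpa [refl2] using hpos)
  have h2 : ∀ᵐ x : ℝ × ℝ, x.1 ≠ 0 := by
    rw [ae_iff]
    simpa using h0
  filter_upwards [hzero, h1, h2] with x hx h1x h2x
  rcases lt_or_gt_of_ne h2x with hneg | hpos
  · rw [Real.sign_of_neg hneg, abs_of_neg hneg, hx hneg]
    simp [refl2]
  · rw [Real.sign_of_pos hpos, abs_of_pos hpos, h1x hpos, one_mul, sub_zero]

variable {f : ℝ × ℝ → ℝ}

/-- Change of variables for the lintegral of `ofReal |f · - c|` over a reflected square. -/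
lemma lintegral_reflect (f : ℝ × ℝ → ℝ) (c : ℝ) (a b ℓ : ℝ) :
    ∫⁻ x in openSquare a b ℓ, ENNReal.ofReal |f (refl2 x) - c|
      = ∫⁻ y in openSquare (-a - ℓ) b ℓ, ENNReal.ofReal |f y - c| := by
  rw [← refl2_preimage a b ℓ]
  exact refl2_mp.setLIntegral_comp_preimage_emb refl2_emb
    (fun y => ENNReal.ofReal |f y - c|) _

lemma average_reflect (hf : LocallyIntegrable f) (a b ℓ : ℝ) :
    (⨍ y in openSquare a b ℓ, f (refl2 y)) = ⨍ y in openSquare (-a - ℓ) b ℓ, f y := by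
  rw [setAverage_eq, setAverage_eq, measureReal_def, measureReal_def, volume_openSquare, volume_openSquare,
    ← refl2_mp.setIntegral_preimage_emb refl2_emb f (openSquare (-a - ℓ) b ℓ),
    refl2_preimage a b ℓ]

/-- The average of the odd reflection over a square. -/
lemma average_odd (hf : LocallyIntegrable f) (hzero : ∀ᵐ x : ℝ × ℝ, x.1 < 0 → f x = 0)
    (a b ℓ : ℝ) :
    (⨍ y in openSquare a b ℓ, Real.sign y.1 * f (|y.1|, y.2))
      = (⨍ y in openSquare a b ℓ, f y) - ⨍ y in openSquare (-a - ℓ) b ℓ, f y := by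
  have hg : IntegrableOn (fun x => f (refl2 x)) (openSquare a b ℓ) volume := by
    have h := (refl2_mp.integrableOn_comp_preimage refl2_emb
      (f := f) (s := openSquare (-a - ℓ) b ℓ)).mpr (integrableOn_openSquare hf (-a - ℓ) b ℓ)
    rwa [refl2_preimage a b ℓ] at h
  rw [← average_reflect hf a b ℓ]
  rw [average_congr (ae_restrict_of_ae (odd_ae f hzero))]
  rw [setAverage_eq, setAverage_eq, setAverage_eq, ← smul_sub,
    ← integral_sub (integrableOn_openSquare hf a b ℓ) hg]

end Stmt10Aux

open Stmt10Aux

/-- odd reflection across the vertical axis does not increase the `bmo`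
norm by more than a factor `2`. If `f : ℝ² → ℝ` is locally integrable, vanishes a.e. on
the half-plane `{x₁ < 0}`, and has finite `bmo` norm, then the odd reflection
`h(x₁,x₂) = sign(x₁) f(|x₁|,x₂)` satisfies `‖h‖_bmo ≤ 2 ‖f‖_bmo`. -/
theorem stmt10 (f : ℝ × ℝ → ℝ)
    (hf : MeasureTheory.LocallyIntegrable f)
    (hzero : ∀ᵐ x : ℝ × ℝ, x.1 < 0 → f x = 0)
    (hbmo : bmoNorm f < ⊤) :
    bmoNorm (fun x : ℝ × ℝ => Real.sign x.1 * f (|x.1|, x.2)) ≤ 2 * bmoNorm f := by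
  classical
  set h : ℝ × ℝ → ℝ := fun x : ℝ × ℝ => Real.sign x.1 * f (|x.1|, x.2) with hh
  set g : ℝ × ℝ → ℝ := fun x => f (refl2 x) with hg
  -- the two halves of the bmo norm
  set A : (ℝ × ℝ → ℝ) → ENNReal := fun u =>
    ⨆ (a : ℝ) (b : ℝ) (ℓ : ℝ) (_ : 0 < ℓ) (_ : ℓ ^ 2 < 1),
      ENNReal.ofReal ((ℓ ^ 2)⁻¹) *
        ∫⁻ x in openSquare a b ℓ, ENNReal.ofReal |u x - ⨍ y in openSquare a b ℓ, u y| with hA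
  set B : (ℝ × ℝ → ℝ) → ENNReal := fun u =>
    ⨆ (a : ℝ) (b : ℝ) (ℓ : ℝ) (_ : 0 < ℓ) (_ : 1 ≤ ℓ ^ 2),
      ENNReal.ofReal ((ℓ ^ 2)⁻¹) *
        ∫⁻ x in openSquare a b ℓ, ENNReal.ofReal |u x| with hB
  have hbmoEq : ∀ u, bmoNorm u = A u + B u := fun u => rfl
  -- ae measurability helpers
  have hfm : AEStronglyMeasurable f volume := hf.aestronglyMeasurable
  -- per-square oscillation bound
  have oscBound : ∀ a b ℓ : ℝ,
      (∫⁻ x in openSquare a b ℓ, ENNReal.ofReal |h x - ⨍ y in openSquare a b ℓ, h y|)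
        ≤ (∫⁻ x in openSquare a b ℓ, ENNReal.ofReal |f x - ⨍ y in openSquare a b ℓ, f y|)
          + ∫⁻ x in openSquare (-a - ℓ) b ℓ,
              ENNReal.ofReal |f x - ⨍ y in openSquare (-a - ℓ) b ℓ, f y| := by
    intro a b ℓ
    set Q := openSquare a b ℓ with hQ
    set Q' := openSquare (-a - ℓ) b ℓ with hQ'
    set cf : ℝ := ⨍ y in Q, f y with hcf
    set cg : ℝ := ⨍ y in Q', f y with hcg
    have havg : (⨍ y in Q, h y) = cf - cg := average_odd hf hzero a b ℓ
    have hae : ∀ᵐ x ∂(volume.restrict Q),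
        ENNReal.ofReal |h x - ⨍ y in Q, h y|
          ≤ ENNReal.ofReal |f x - cf| + ENNReal.ofReal |g x - cg| := by
      filter_upwards [ae_restrict_of_ae (odd_ae f hzero)] with x hx
      have hx' : h x = f x - g x := hx
      rw [havg, hx']
      refine le_trans (ENNReal.ofReal_le_ofReal ?_) ENNReal.ofReal_add_le
      have : f x - g x - (cf - cg) = (f x - cf) - (g x - cg) := by ring
      rw [this]
      exact abs_sub _ _
    refine le_trans (lintegral_mono_ae hae) ?_
    have hmeas : AEMeasurable (fun x => ENNReal.ofReal |f x - cf|) (volume.restrict Q) := by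
      have h1 : AEMeasurable (fun x => f x - cf) (volume.restrict Q) :=
        (hfm.restrict.aemeasurable.sub aemeasurable_const)
      exact (measurable_abs.comp_aemeasurable h1).ennreal_ofReal
    rw [lintegral_add_left' hmeas]
    have : (∫⁻ x in Q, ENNReal.ofReal |g x - cg|) =
        ∫⁻ y in Q', ENNReal.ofReal |f y - cg| := lintegral_reflect f cg a b ℓ
    rw [this]
  -- per-square mean bound
  have meanBound : ∀ a b ℓ : ℝ,
      (∫⁻ x in openSquare a b ℓ, ENNReal.ofReal |h x|)
        ≤ (∫⁻ x in openSquare a b ℓ, ENNReal.ofReal |f x|)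
          + ∫⁻ x in openSquare (-a - ℓ) b ℓ, ENNReal.ofReal |f x| := by
    intro a b ℓ
    set Q := openSquare a b ℓ with hQ
    have hae : ∀ᵐ x ∂(volume.restrict Q),
        ENNReal.ofReal |h x| ≤ ENNReal.ofReal |f x| + ENNReal.ofReal |g x| := by
      filter_upwards [ae_restrict_of_ae (odd_ae f hzero)] with x hx
      have hx' : h x = f x - g x := hx
      rw [hx']
      exact le_trans (ENNReal.ofReal_le_ofReal (abs_sub _ _)) ENNReal.ofReal_add_le
    refine le_trans (lintegral_mono_ae hae) ?_
    have hmeas : AEMeasurable (fun x => ENNReal.ofReal |f x|) (volume.restrict Q) :=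
      (measurable_abs.comp_aemeasurable hfm.restrict.aemeasurable).ennreal_ofReal
    rw [lintegral_add_left' hmeas]
    have : (∫⁻ x in Q, ENNReal.ofReal |g x|) =
        ∫⁻ y in openSquare (-a - ℓ) b ℓ, ENNReal.ofReal |f y| := by
      have := lintegral_reflect f 0 a b ℓ
      simpa using this
    rw [this]
  -- assemble
  have hAle : A h ≤ A f + A f := by
    refine iSup_le fun a => iSup_le fun b => iSup_le fun ℓ => iSup_le fun hℓ =>
      iSup_le fun hℓ2 => ?_
    have step : ENNReal.ofReal ((ℓ ^ 2)⁻¹) *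
        (∫⁻ x in openSquare a b ℓ, ENNReal.ofReal |h x - ⨍ y in openSquare a b ℓ, h y|)
        ≤ ENNReal.ofReal ((ℓ ^ 2)⁻¹) *
            (∫⁻ x in openSquare a b ℓ, ENNReal.ofReal |f x - ⨍ y in openSquare a b ℓ, f y|)
          + ENNReal.ofReal ((ℓ ^ 2)⁻¹) *
            (∫⁻ x in openSquare (-a - ℓ) b ℓ,
              ENNReal.ofReal |f x - ⨍ y in openSquare (-a - ℓ) b ℓ, f y|) := by
      rw [← mul_add]
      exact mul_le_mul_right (oscBound a b ℓ) _
    refine le_trans step (add_le_add ?_ ?_)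
    · exact le_iSup_of_le a (le_iSup_of_le b (le_iSup_of_le ℓ
        (le_iSup_of_le hℓ (le_iSup_of_le hℓ2 le_rfl))))
    · exact le_iSup_of_le (-a - ℓ) (le_iSup_of_le b (le_iSup_of_le ℓ
        (le_iSup_of_le hℓ (le_iSup_of_le hℓ2 le_rfl))))
  have hBle : B h ≤ B f + B f := by
    refine iSup_le fun a => iSup_le fun b => iSup_le fun ℓ => iSup_le fun hℓ =>
      iSup_le fun hℓ2 => ?_
    have step : ENNReal.ofReal ((ℓ ^ 2)⁻¹) *
        (∫⁻ x in openSquare a b ℓ, ENNReal.ofReal |h x|)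
        ≤ ENNReal.ofReal ((ℓ ^ 2)⁻¹) *
            (∫⁻ x in openSquare a b ℓ, ENNReal.ofReal |f x|)
          + ENNReal.ofReal ((ℓ ^ 2)⁻¹) *
            (∫⁻ x in openSquare (-a - ℓ) b ℓ, ENNReal.ofReal |f x|) := by
      rw [← mul_add]
      exact mul_le_mul_right (meanBound a b ℓ) _
    refine le_trans step (add_le_add ?_ ?_)
    · exact le_iSup_of_le a (le_iSup_of_le b (le_iSup_of_le ℓ
        (le_iSup_of_le hℓ (le_iSup_of_le hℓ2 le_rfl))))
    · exact le_iSup_of_le (-a - ℓ) (le_iSup_of_le b (le_iSup_of_le ℓ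
        (le_iSup_of_le hℓ (le_iSup_of_le hℓ2 le_rfl))))
  calc bmoNorm h = A h + B h := hbmoEq h
    _ ≤ (A f + A f) + (B f + B f) := add_le_add hAle hBle
    _ = (A f + B f) + (A f + B f) := by rw [add_add_add_comm]
    _ = 2 * bmoNorm f := by rw [hbmoEq f, two_mul]
end
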